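/- The function ρ(d) = (1/(2J₂(2))) e^{−3|d|/2} J₁(2e^{−|d|/2}) is a probability density on ℝ: it is nonnegative and ∫_ℝ ρ(d) dd = 1. -/

import Mathlib

open Real MeasureTheory

/-- The Bessel function of the first kind of integer order `n`. -/
noncomputable def besselJ (n : ℕ) (x : ℝ) : ℝ :=
  ∑' m : ℕ, (-1 : ℝ) ^ m / (m.factorial * (m + n).factorial) * (x / 2) ^ (2 * m + n)

/-- The stationary density of the difference chain. -/
noncomputable def ρstat (d : ℝ) : ℝ :=
  (1 / (2 * besselJ 2 2)) * exp (-(3 * |d| / 2)) * besselJ 1 (2 * exp (-(|d| / 2)))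

/-!
Expanding `J₁` in its power series gives
`e^{-3|d|/2} J₁(2e^{-|d|/2}) = ∑ₘ (-1)ᵐ e^{-(m+2)|d|} / (m! (m+1)!)`, a series that may be integrated
termwise because `∫ e^{-(m+2)|d|} dd = 2/(m+2)` makes the integrals of the moduli summable; the
`m`-th integral is `2 (-1)ᵐ / (m! (m+2)!)`, the `m`-th term of `2 J₂(2)`.
For `0 ≤ x ≤ 2` the moduli of the terms of the series of `Jₙ(x)` decrease, so its even partial sums
are lower bounds: this gives `J₁ ≥ 0` on `[0, 2]` and `J₂(2) ≥ 1/2 - 1/6 > 0`.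
-/

open Finset Nat

noncomputable def besselTerm (n : ℕ) (x : ℝ) (m : ℕ) : ℝ :=
  (x / 2) ^ (2 * m + n) / (m ! * (m + n)!)

lemma besselJ_eq_tsum (n : ℕ) (x : ℝ) : besselJ n x = ∑' m, (-1) ^ m * besselTerm n x m :=
  tsum_congr fun m => by rw [besselTerm]; ring

lemma abs_besselTerm_le (n : ℕ) (x : ℝ) (m : ℕ) :
    |besselTerm n x m| ≤ |x / 2| ^ n * (((x / 2) ^ 2) ^ m / m !) := by
  have hfac : (m ! : ℝ) ≤ m ! * (m + n)! := le_mul_of_one_le_right (by positivity)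
    (by exact_mod_cast (m + n).factorial_pos)
  rw [besselTerm, abs_div, abs_pow, abs_of_pos (by positivity : (0 : ℝ) < m ! * (m + n)!),
    ← mul_div_assoc, ← sq_abs, ← pow_mul, ← pow_add, add_comm n]
  gcongr

lemma summable_besselTerm (n : ℕ) (x : ℝ) : Summable (besselTerm n x) :=
  .of_norm_bounded ((Real.summable_pow_div_factorial _).mul_left _) (abs_besselTerm_le n x)

lemma besselTerm_antitone (n : ℕ) {x : ℝ} (h0 : 0 ≤ x) (h2 : x ≤ 2) :
    Antitone (besselTerm n x) := by
  refine antitone_nat_of_succ_le fun m => ?_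
  have hfac : (m ! * (m + n)! : ℝ) ≤ (m + 1)! * (m + 1 + n)! := by
    exact_mod_cast Nat.mul_le_mul (factorial_le (by omega)) (factorial_le (by omega))
  exact div_le_div₀ (by positivity)
    (pow_le_pow_of_le_one (by linarith) (by linarith) (by omega)) (by positivity) hfac

lemma sum_range_two_mul_le_besselJ (n : ℕ) {x : ℝ} (h0 : 0 ≤ x) (h2 : x ≤ 2) (k : ℕ) :
    ∑ i ∈ range (2 * k), (-1) ^ i * besselTerm n x i ≤ besselJ n x :=
  besselJ_eq_tsum n x ▸ (besselTerm_antitone n h0 h2).alternating_series_le_tendsto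
    (summable_besselTerm n x).tendsto_alternating_series_tsum k

lemma besselJ_nonneg (n : ℕ) {x : ℝ} (h0 : 0 ≤ x) (h2 : x ≤ 2) : 0 ≤ besselJ n x := by
  simpa using sum_range_two_mul_le_besselJ n h0 h2 0

lemma besselJ_two_two_pos : 0 < besselJ 2 2 := by
  have h := sum_range_two_mul_le_besselJ 2 zero_le_two le_rfl 1
  norm_num [besselTerm, sum_range_succ, factorial] at h
  linarith

lemma integral_exp_neg_mul_abs {b : ℝ} (hb : 0 < b) : ∫ x, exp (-(b * |x|)) = 2 / b := by
  rw [integral_comp_abs (f := fun x => exp (-(b * x)))]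
  simp_rw [← neg_mul]
  rw [integral_exp_mul_Ioi (neg_lt_zero.2 hb)]
  field_simp
  simp

lemma exp_mul_besselTerm_one (t : ℝ) (m : ℕ) :
    exp (-(3 * t / 2)) * besselTerm 1 (2 * exp (-(t / 2))) m
      = exp (-((m + 2) * t)) / (m ! * (m + 1)!) := by
  rw [besselTerm, mul_div_cancel_left₀ _ two_ne_zero, ← exp_nat_mul, mul_div_assoc',
    ← exp_add]
  push_cast
  ring_nf

lemma integral_exp_mul_besselTerm_one (m : ℕ) :
    ∫ d, exp (-(3 * |d| / 2)) * besselTerm 1 (2 * exp (-(|d| / 2))) m = 2 * besselTerm 2 2 m := by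
  have hm : (0 : ℝ) < m + 2 := by positivity
  simp_rw [exp_mul_besselTerm_one, integral_div, integral_exp_neg_mul_abs hm]
  rw [besselTerm]
  push_cast [factorial_succ]
  field_simp
  ring

lemma integral_exp_mul_besselJ_one :
    ∫ d, exp (-(3 * |d| / 2)) * besselJ 1 (2 * exp (-(|d| / 2))) = 2 * besselJ 2 2 := by
  set g : ℕ → ℝ → ℝ :=
    fun m d => exp (-(3 * |d| / 2)) * besselTerm 1 (2 * exp (-(|d| / 2))) m
  have hg_nonneg (m : ℕ) (d : ℝ) : 0 ≤ g m d := by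
    simp only [g, exp_mul_besselTerm_one]
    positivity
  have hg_integral (m : ℕ) : ∫ d, g m d = 2 * besselTerm 2 2 m :=
    integral_exp_mul_besselTerm_one m
  have hg_integrable (m : ℕ) : Integrable (g m) :=
    .of_integral_ne_zero (by rw [hg_integral, besselTerm]; positivity)
  have hswap := integral_tsum_of_summable_integral_norm (F := fun m d => (-1) ^ m * g m d)
    (fun m => (hg_integrable m).const_mul _) (by
      simp_rw [norm_mul, norm_pow, norm_neg, norm_one, one_pow, one_mul,
        Real.norm_of_nonneg (hg_nonneg _ _), hg_integral]
      exact (summable_besselTerm 2 2).mul_left 2)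
  calc ∫ d, exp (-(3 * |d| / 2)) * besselJ 1 (2 * exp (-(|d| / 2)))
      = ∫ d, ∑' m, (-1) ^ m * g m d := by
        simp_rw [g, besselJ_eq_tsum, ← tsum_mul_left, mul_left_comm]
    _ = ∑' m, ∫ d, (-1) ^ m * g m d := hswap.symm
    _ = 2 * besselJ 2 2 := by
        simp_rw [integral_const_mul, hg_integral, besselJ_eq_tsum, ← tsum_mul_left, mul_left_comm]

theorem ρstat_probability_density :
    (∀ d : ℝ, 0 ≤ ρstat d) ∧ (∫ d : ℝ, ρstat d = 1) := by
  have hJ₂ := besselJ_two_two_pos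
  refine ⟨fun d => ?_, ?_⟩
  · have hexp : exp (-(|d| / 2)) ≤ 1 := exp_le_one_iff.2 (by linarith [abs_nonneg d])
    have hJ₁ := besselJ_nonneg 1 (x := 2 * exp (-(|d| / 2))) (by positivity) (by linarith)
    unfold ρstat
    positivity
  · simp_rw [ρstat, mul_assoc]
    rw [integral_const_mul, integral_exp_mul_besselJ_one]
    field_simp
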